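/- arXiv:2604.12092 — 3 statements merged into one kernel-verified Lean document; each statement's English description precedes it below -/
import Mathlib

section
/- The TBT Sequence operator is associative: for any trajectory x and time steps t1 ≤ t2, x, t1, t2 ⊨ Seq(Seq(φ1, φ2), φ3) if and only if x, t1, t2 ⊨ Seq(φ1, Seq(φ2, φ3)). -/
/-- Booleanized satisfaction of the TBT Sequence operator over partial
    trajectories, given satisfaction relations for the two subformulas. -/
def SeqSat (A B : ℕ → ℕ → Prop) (t1 t2 : ℕ) : Prop :=
  ∃ τ, t1 ≤ τ ∧ τ + 1 ≤ t2 ∧ A t1 τ ∧ B (τ + 1) t2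

theorem seq_assoc_general (S1 S2 S3 : ℕ → ℕ → Prop) (t1 t2 : ℕ) :
    SeqSat (SeqSat S1 S2) S3 t1 t2 ↔ SeqSat S1 (SeqSat S2 S3) t1 t2 := by
  constructor
  · rintro ⟨τ, hτ1, hτ2, ⟨σ, hσ1, hσ2, h1, h2⟩, h3⟩
    exact ⟨σ, hσ1, by omega, h1, τ, by omega, hτ2, h2, h3⟩
  · rintro ⟨σ, hσ1, hσ2, h1, τ, hτ1, hτ2, h2, h3⟩
    exact ⟨τ, by omega, hτ2, ⟨σ, hσ1, by omega, h1, h2⟩, h3⟩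

/-- The TBT Sequence operator is associative. -/
theorem seq_assoc (S1 S2 S3 : ℕ → ℕ → Prop) (t1 t2 : ℕ) (h : t1 ≤ t2) :
    SeqSat (SeqSat S1 S2) S3 t1 t2 ↔ SeqSat S1 (SeqSat S2 S3) t1 t2 :=
  seq_assoc_general S1 S2 S3 t1 t2
end

section
/- Under the integer encoding, the mixed-integer constraints for conjunction are exact: given integers z_1, …, z_m ∈ {−1, 0, 1}, an integer z, and binary variables b_1, …, b_m ∈ {0,1} with Σ b_j = 1, if z ≤ z_j for all j and z ≥ z_j − 2(1 − b_j) for all j, then z = min_j z_j. Conversely, if z = min_j z_j, then there exist such b_j making all constraints hold. -/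
/-!
With `b` a one-hot vector, the lower constraints make `w` a lower bound of the `z j`, and the
upper constraint of the selected index `j₀` reads `z j₀ ≤ w`, so `w` is the minimum. Conversely,
select an index where the minimum is attained; the remaining upper constraints only ask
`z j - 2 ≤ min z`, which holds because the values lie in `{-1, 0, 1}`, so any two differ by at
most the big-M constant `2`.
-/

open Finset

variable {ι : Type*}

lemma Finset.inf'_eq_of_forall_le_of_le {α : Type*} [SemilatticeInf α] {s : Finset ι}
    (H : s.Nonempty) {f : ι → α} {a : α} (hle : ∀ j ∈ s, a ≤ f j) {j : ι} (hj : j ∈ s)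
    (hja : f j ≤ a) : s.inf' H f = a :=
  le_antisymm ((inf'_le f hj).trans hja) (le_inf' H f hle)

variable [Fintype ι]

lemma exists_eq_one_of_sum_eq_one {b : ι → ℤ} (hb : ∀ j, b j = 0 ∨ b j = 1)
    (hsum : ∑ j, b j = 1) : ∃ j, b j = 1 := by
  obtain ⟨j, -, hj⟩ := exists_ne_zero_of_sum_ne_zero (hsum ▸ one_ne_zero)
  exact ⟨j, (hb j).resolve_left hj⟩

lemma eq_inf'_of_bigM_constraints {M w : ℤ} {z b : ι → ℤ} (H : (univ : Finset ι).Nonempty)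
    {j₀ : ι} (hj₀ : b j₀ = 1) (hlow : ∀ j, w ≤ z j) (hup : ∀ j, z j - M * (1 - b j) ≤ w) :
    w = univ.inf' H z := by
  refine (inf'_eq_of_forall_le_of_le H (fun j _ => hlow j) (mem_univ j₀) ?_).symm
  simpa [hj₀] using hup j₀

lemma bigM_constraints_single_argmin [DecidableEq ι] {M : ℤ} {z : ι → ℤ}
    (hM : ∀ i j, z i - z j ≤ M) (H : (univ : Finset ι).Nonempty) {j₀ : ι}
    (hj₀ : univ.inf' H z = z j₀) (j : ι) :
    z j - M * (1 - (Pi.single j₀ 1 : ι → ℤ) j) ≤ univ.inf' H z := by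
  rw [hj₀]
  obtain rfl | hj := eq_or_ne j j₀
  · simp
  · simpa [Pi.single_apply, hj, add_comm] using hM j j₀

/-- Exactness of the mixed-integer encoding of ternary conjunction (min). -/
theorem mi_conj_exact (m : ℕ) (hm : 1 ≤ m) (z : Fin m → ℤ)
    (hz : ∀ j, z j = -1 ∨ z j = 0 ∨ z j = 1) (w : ℤ) :
    ((∀ b : Fin m → ℤ, (∀ j, b j = 0 ∨ b j = 1) → (∑ j, b j) = 1 →
        (∀ j, w ≤ z j) → (∀ j, z j - 2 * (1 - b j) ≤ w) →
        w = Finset.univ.inf' ⟨⟨0, hm⟩, Finset.mem_univ _⟩ z) ∧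
     (w = Finset.univ.inf' ⟨⟨0, hm⟩, Finset.mem_univ _⟩ z →
        ∃ b : Fin m → ℤ, (∀ j, b j = 0 ∨ b j = 1) ∧ (∑ j, b j) = 1 ∧
          (∀ j, w ≤ z j) ∧ (∀ j, z j - 2 * (1 - b j) ≤ w))) := by
  refine ⟨fun b hb hsum hlow hup => ?_, ?_⟩
  · obtain ⟨j₀, hj₀⟩ := exists_eq_one_of_sum_eq_one hb hsum
    exact eq_inf'_of_bigM_constraints _ hj₀ hlow hup
  · rintro rfl
    obtain ⟨j₀, -, hj₀⟩ := exists_mem_eq_inf' ⟨⟨0, hm⟩, mem_univ _⟩ z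
    have hspread (i j : Fin m) : z i - z j ≤ 2 := by
      have := hz i; have := hz j; omega
    refine ⟨Pi.single j₀ 1, fun j => ?_, by simp, fun j => inf'_le z (mem_univ j),
      bigM_constraints_single_argmin hspread _ hj₀⟩
    rw [Pi.single_apply]
    split_ifs <;> simp
end

section
/- For partial-trajectory STL, the always and eventually operators are dual: for any trajectory x, time steps t1 ≤ t2, interval [a, b], and formula φ with ternary satisfaction function, the satisfaction of ¬◇_{[a,b]}¬φ equals the satisfaction of □_{[a,b]}φ. -/
/-- K3 negation on K = Fin 3 with F = 0 < U = 1 < T = 2. -/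
def K3.neg (x : Fin 3) : Fin 3 := 2 - x

/-- Ternary partial-trajectory satisfaction of □_{[a,b]}: the conjunction
    (min, with empty conjunction = T) of s over the search window if it fits
    within the partial horizon t2, else capped by U = 1. -/
noncomputable def AlwaysSat (s : ℕ → Fin 3) (a b t1 t2 : ℕ) : Fin 3 :=
  if b + t1 ≤ t2 then (Finset.Icc (a + t1) (b + t1)).inf s
  else min 1 ((Finset.Icc (a + t1) t2).inf s)

/-- Ternary partial-trajectory satisfaction of ◇_{[a,b]}: the disjunction
    (max, with empty disjunction = F) of s over the search window if it fits
    within the partial horizon t2, else floored by U = 1. -/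
noncomputable def EventSat (s : ℕ → Fin 3) (a b t1 t2 : ℕ) : Fin 3 :=
  if b + t1 ≤ t2 then (Finset.Icc (a + t1) (b + t1)).sup s
  else max 1 ((Finset.Icc (a + t1) t2).sup s)


lemma K3.neg_neg (u : Fin 3) : K3.neg (K3.neg u) = u := by revert u; decide

lemma K3.neg_max (u v : Fin 3) : K3.neg (max u v) = min (K3.neg u) (K3.neg v) := by
  revert u v; decide

lemma K3.neg_sup_neg (s : ℕ → Fin 3) (F : Finset ℕ) :
    K3.neg (F.sup (fun τ => K3.neg (s τ))) = F.inf s := by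
  induction F using Finset.induction with
  | empty => simp only [Finset.sup_empty, Finset.inf_empty]; decide
  | insert _ _ hx ih =>
    rw [Finset.sup_insert, Finset.inf_insert, K3.neg_max, ih, K3.neg_neg]

/-- Duality: ¬◇_{[a,b]}¬φ has the same ternary satisfaction as □_{[a,b]}φ. -/
theorem always_eventually_dual (s : ℕ → Fin 3) (a b t1 t2 : ℕ) (h : t1 ≤ t2) :
    K3.neg (EventSat (fun τ => K3.neg (s τ)) a b t1 t2)
      = AlwaysSat s a b t1 t2 := by
  unfold EventSat AlwaysSat
  split
  · rw [K3.neg_sup_neg]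
  · rw [show (1 : Fin 3) = K3.neg 1 from rfl, K3.neg_max, K3.neg_sup_neg, K3.neg_neg]
    congr 1
end
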